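/- arXiv:2503.02586 — 3 statements merged into one kernel-verified Lean document; each statement's English description precedes it below -/
import Mathlib

section
/- Every 4-dimensional 𝔽_q-linear subspace of the space of 3×3 matrices over a finite field 𝔽_q contains a nonzero singular matrix. Consequently, any subspace of M₃(𝔽_q) all of whose nonzero elements are invertible has dimension at most 3. -/
/-!
For a basis `v₁, …, v_r` of `W`, `det (x₁ v₁ + ⋯ + x_r v_r)` is a form of degree `n` in `r`
variables. When `n < r`, Chevalley–Warning says that the characteristic of `𝔽_q` divides its
number of zeros; since `x = 0` is one zero there is another, i.e. a nonzero singular matrix in `W`.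
-/

open MvPolynomial Module

theorem MvPolynomial.IsHomogeneous.exists_ne_zero_eval_eq_zero {K σ : Type*} [Field K]
    [Fintype K] [Fintype σ] {f : MvPolynomial σ K} {d : ℕ} (hf : f.IsHomogeneous d)
    (hd₀ : d ≠ 0) (hd : d < Fintype.card σ) : ∃ x ≠ 0, eval x f = 0 := by
  classical
  obtain ⟨p, _⟩ := CharP.exists K
  have : Fact p.Prime := ⟨CharP.char_is_prime K p⟩
  have hzero : eval 0 f = 0 := by
    rw [eval_zero, constantCoeff_eq]
    exact hf.coeff_eq_zero (by simpa using hd₀.symm)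
  have hdvd := char_dvd_card_solutions p (hf.totalDegree_le.trans_lt hd)
  have hcard : 1 < Fintype.card { x : σ → K // eval x f = 0 } :=
    (Fact.out : p.Prime).one_lt.trans_le (Nat.le_of_dvd (Fintype.card_pos_iff.2 ⟨⟨0, hzero⟩⟩) hdvd)
  obtain ⟨⟨x, hx⟩, hne⟩ := Fintype.exists_ne_of_one_lt_card hcard ⟨0, hzero⟩
  exact ⟨x, fun h => hne (Subtype.ext h), hx⟩

theorem Matrix.isHomogeneous_det {n σ R : Type*} [Fintype n] [DecidableEq n] [CommRing R]
    {A : Matrix n n (MvPolynomial σ R)} {m : ℕ} (hA : ∀ i j, (A i j).IsHomogeneous m) :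
    A.det.IsHomogeneous (m * Fintype.card n) := by
  rw [det_apply']
  refine IsHomogeneous.sum _ _ _ fun τ _ => ?_
  have := (IsHomogeneous.prod Finset.univ (fun i => A (τ i) i) (fun _ => m)
    fun i _ => hA _ _)
  simpa [mul_comm] using this.C_mul ((Equiv.Perm.sign τ : ℤ) : R)

theorem Matrix.exists_ne_zero_det_sum_smul_eq_zero {K n ι : Type*} [Field K] [Fintype K]
    [Fintype n] [DecidableEq n] [Nonempty n] [Fintype ι] (v : ι → Matrix n n K)
    (h : Fintype.card n < Fintype.card ι) :
    ∃ x : ι → K, x ≠ 0 ∧ (∑ k, x k • v k).det = 0 := by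
  let P : MvPolynomial ι K := (∑ k, X (R := K) k • (v k).map C).det
  have hP : P.IsHomogeneous (1 * Fintype.card n) := by
    refine isHomogeneous_det fun i j => ?_
    simp only [Matrix.sum_apply, Matrix.smul_apply, Matrix.map_apply, smul_eq_mul, mul_comm (X _)]
    exact IsHomogeneous.sum _ _ _ fun k _ => isHomogeneous_C_mul_X _ k
  have heval (x : ι → K) : eval x P = (∑ k, x k • v k).det := by
    rw [RingHom.map_det]
    congr 1
    ext i j
    simp [Matrix.sum_apply, Matrix.smul_apply]
  obtain ⟨x, hx0, hx⟩ := hP.exists_ne_zero_eval_eq_zero (by simp) (by simpa using h)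
  exact ⟨x, hx0, heval x ▸ hx⟩

theorem Submodule.exists_ne_zero_det_eq_zero {K n : Type*} [Field K] [Fintype K]
    [Fintype n] [DecidableEq n] (W : Submodule K (Matrix n n K))
    (h : Fintype.card n < finrank K W) : ∃ M ∈ W, M ≠ 0 ∧ M.det = 0 := by
  have : Nonempty n := by
    by_contra! hn
    simp [finrank_zero_of_subsingleton] at h
  let b := finBasis K W
  obtain ⟨x, hx0, hx⟩ :=
    Matrix.exists_ne_zero_det_sum_smul_eq_zero (fun i => (b i : Matrix n n K)) (by simpa using h)
  refine ⟨b.equivFun.symm x, (b.equivFun.symm x).2, ?_, ?_⟩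
  · rwa [ne_eq, Submodule.coe_eq_zero, LinearEquiv.map_eq_zero_iff]
  · simpa [Basis.equivFun_symm_apply] using hx

theorem Submodule.finrank_le_of_forall_ne_zero_isUnit {K n : Type*} [Field K] [Fintype K]
    [Fintype n] [DecidableEq n] (W : Submodule K (Matrix n n K))
    (hW : ∀ M ∈ W, M ≠ 0 → IsUnit M) : finrank K W ≤ Fintype.card n := by
  by_contra! h
  obtain ⟨M, hMW, hM0, hdet⟩ := W.exists_ne_zero_det_eq_zero h
  simpa [hdet] using (Matrix.isUnit_iff_isUnit_det M).1 (hW M hMW hM0)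

/-- Every 4-dimensional subspace of `M₃(𝔽_q)` contains a nonzero singular matrix;
consequently a subspace all of whose nonzero elements are invertible has dimension
at most 3. -/
theorem stmt3 {F : Type*} [Field F] [Fintype F] :
    (∀ W : Submodule F (Matrix (Fin 3) (Fin 3) F), Module.finrank F W = 4 →
      ∃ M ∈ W, M ≠ 0 ∧ M.det = 0) ∧
    (∀ W : Submodule F (Matrix (Fin 3) (Fin 3) F),
      (∀ M ∈ W, M ≠ 0 → IsUnit M) → Module.finrank F W ≤ 3) :=
  ⟨fun W hW => W.exists_ne_zero_det_eq_zero (by simp [hW]),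
    fun W hW => by simpa using W.finrank_le_of_forall_ne_zero_isUnit hW⟩
end

section
/- Let q be even and consider the 3-dimensional 𝔽_q-subspace W of symmetric 3×3 matrices consisting of all matrices M(x,y,z) = [[0, x, z], [x, z, y], [z, y, 0]] for x, y, z ∈ 𝔽_q. Then det M(x,y,z) = z³; consequently every nonzero element of W has rank ≥ 2, the elements of rank exactly 2 are precisely the nonzero elements with z = 0, and every element with z ≠ 0 has rank 3. -/
/-!
Expanding along the first row gives `det M(x,y,z) = 2xyz - z³`, which is `z³` in
characteristic 2, so `z ≠ 0` forces full rank. When `z = 0` the determinant vanishes in any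
field, so the rank is at most 2, while a nonzero `x` or `y` produces the invertible `2 × 2`
minor `!![0, x; x, 0]` or `!![0, y; y, 0]`, so the rank is at least 2.
-/

namespace Matrix

variable {K m n k : Type*} [Field K] [Fintype n]

theorem rank_lt_card_of_det_eq_zero [DecidableEq n] (A : Matrix n n K) (h : A.det = 0) :
    A.rank < Fintype.card n := by
  obtain ⟨v, hv, hAv⟩ := exists_mulVec_eq_zero_iff.mpr h
  have hker : 0 < Module.finrank K (LinearMap.ker A.mulVecLin) :=
    Module.finrank_pos_iff_exists_ne_zero.mpr ⟨⟨v, hAv⟩, fun h0 => hv (congrArg Subtype.val h0)⟩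
  have := LinearMap.finrank_range_add_finrank_ker A.mulVecLin
  rw [Module.finrank_fintype_fun_eq_card] at this
  exact rank.eq_def A ▸ by omega

theorem card_le_rank_of_det_submatrix_ne_zero [Fintype k] [DecidableEq k] (A : Matrix m n K)
    (r : k → m) (c : k → n) (h : (A.submatrix r c).det ≠ 0) : Fintype.card k ≤ A.rank :=
  rank_of_det_ne_zero h ▸ rank_submatrix_le A r c

end Matrix

open Matrix

def netMatrix {R : Type*} [Zero R] (x y z : R) : Matrix (Fin 3) (Fin 3) R :=
  !![0, x, z; x, z, y; z, y, 0]

section netMatrix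

variable {K : Type*} [Field K]

theorem det_netMatrix {R : Type*} [CommRing R] (x y z : R) :
    (netMatrix x y z).det = 2 * x * y * z - z ^ 3 := by
  simp only [netMatrix, det_fin_three, of_apply, cons_val', cons_val_zero, cons_val_one,
    cons_val_two, empty_val', cons_val_fin_one, head_cons, tail_cons, head_fin_const]
  ring

theorem det_netMatrix_of_charTwo {R : Type*} [CommRing R] [CharP R 2] (x y z : R) :
    (netMatrix x y z).det = z ^ 3 := by
  rw [det_netMatrix, CharTwo.two_eq_zero, CharTwo.sub_eq_add]
  ring

theorem netMatrix_zero_zero_zero {R : Type*} [Zero R] : netMatrix (0 : R) 0 0 = 0 := by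
  ext i j
  fin_cases i <;> fin_cases j <;> rfl

theorem rank_netMatrix_of_ne_zero [CharP K 2] (x y : K) {z : K} (hz : z ≠ 0) :
    (netMatrix x y z).rank = 3 := by
  simpa using rank_of_det_ne_zero (by simpa [det_netMatrix_of_charTwo] : (netMatrix x y z).det ≠ 0)

theorem rank_netMatrix_le_two (x y : K) : (netMatrix x y 0).rank ≤ 2 := by
  have := rank_lt_card_of_det_eq_zero (netMatrix x y 0) (by simp [det_netMatrix])
  simpa [Nat.lt_succ_iff] using this

theorem two_le_rank_netMatrix {x y : K} (h : ¬(x = 0 ∧ y = 0)) : 2 ≤ (netMatrix x y 0).rank := by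
  by_cases hx : x = 0
  · have hy : y ≠ 0 := fun hy => h ⟨hx, hy⟩
    simpa using card_le_rank_of_det_submatrix_ne_zero (netMatrix x y 0) Fin.succ Fin.succ
      (by simpa [netMatrix, det_fin_two] using hy)
  · simpa using card_le_rank_of_det_submatrix_ne_zero (netMatrix x y 0) Fin.castSucc Fin.castSucc
      (by simpa [netMatrix, det_fin_two] using hx)

end netMatrix

theorem stmt10_general {F : Type*} [Field F] [CharP F 2] (x y z : F) :
    (!![0, x, z; x, z, y; z, y, 0] : Matrix (Fin 3) (Fin 3) F).det = z ^ 3 ∧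
    (¬(x = 0 ∧ y = 0 ∧ z = 0) →
      2 ≤ (!![0, x, z; x, z, y; z, y, 0] : Matrix (Fin 3) (Fin 3) F).rank) ∧
    ((!![0, x, z; x, z, y; z, y, 0] : Matrix (Fin 3) (Fin 3) F).rank = 2 ↔
      ¬(x = 0 ∧ y = 0 ∧ z = 0) ∧ z = 0) ∧
    (z ≠ 0 → (!![0, x, z; x, z, y; z, y, 0] : Matrix (Fin 3) (Fin 3) F).rank = 3) := by
  change (netMatrix x y z).det = _ ∧ (_ → 2 ≤ (netMatrix x y z).rank) ∧
    ((netMatrix x y z).rank = 2 ↔ _) ∧ (_ → (netMatrix x y z).rank = 3)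
  refine ⟨det_netMatrix_of_charTwo x y z, fun hne => ?_, ⟨fun hrank => ?_, ?_⟩,
    rank_netMatrix_of_ne_zero x y⟩
  · rcases eq_or_ne z 0 with rfl | hz
    · exact two_le_rank_netMatrix (by tauto)
    · rw [rank_netMatrix_of_ne_zero x y hz]; omega
  · obtain rfl : z = 0 := by
      by_contra hz
      rw [rank_netMatrix_of_ne_zero x y hz] at hrank
      omega
    refine ⟨fun ⟨hx, hy, _⟩ => ?_, rfl⟩
    rw [hx, hy, netMatrix_zero_zero_zero, rank_zero] at hrank
    omega
  · rintro ⟨hne, rfl⟩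
    exact (rank_netMatrix_le_two x y).antisymm (two_le_rank_netMatrix (by tauto))

/-- For `q` even, the matrices `M(x,y,z) = !![0,x,z; x,z,y; z,y,0]` satisfy
`det M(x,y,z) = z³`; every nonzero such matrix has rank at least 2, the rank equals 2
precisely for the nonzero matrices with `z = 0`, and `z ≠ 0` gives rank 3. -/
theorem stmt10 {F : Type*} [Field F] [Fintype F] [CharP F 2] (x y z : F) :
    (!![0, x, z; x, z, y; z, y, 0] : Matrix (Fin 3) (Fin 3) F).det = z ^ 3 ∧
    (¬(x = 0 ∧ y = 0 ∧ z = 0) →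
      2 ≤ (!![0, x, z; x, z, y; z, y, 0] : Matrix (Fin 3) (Fin 3) F).rank) ∧
    ((!![0, x, z; x, z, y; z, y, 0] : Matrix (Fin 3) (Fin 3) F).rank = 2 ↔
      ¬(x = 0 ∧ y = 0 ∧ z = 0) ∧ z = 0) ∧
    (z ≠ 0 → (!![0, x, z; x, z, y; z, y, 0] : Matrix (Fin 3) (Fin 3) F).rank = 3) :=
  stmt10_general x y z
end

section
/- Let W be a 2-dimensional 𝔽_q-subspace of the space of symmetric 3×3 matrices over 𝔽_q such that every nonzero element of W has rank ≥ 2. Then W is contained in a 3-dimensional subspace W' of symmetric 3×3 matrices all of whose nonzero elements have rank ≥ 2. -/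
/-!
A symmetric matrix of rank at most one is `a • vecMulVec v v`, so `W ⊔ span {M}` has a nonzero
element of rank `≤ 1` outside `W` only if `M ∈ W ⊔ span {vecMulVec v v}` for some `v ≠ 0`.
These `q³ - 1` subspaces have at most `q³` elements each, fewer than the `q⁶` symmetric
matrices, so some symmetric `M` avoids all of them.
-/

open Module Submodule

namespace Matrix

variable {m n F : Type*} [Field F]

theorem exists_eq_vecMulVec_of_rank_le_one [Fintype n] [Finite m] {N : Matrix m n F}
    (h : N.rank ≤ 1) : ∃ (c : m → F) (u : n → F), N = vecMulVec c u := by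
  rw [rank_eq_finrank_span_row] at h
  obtain ⟨u, hu⟩ := finrank_le_one_iff.mp h
  choose c hc using fun i => hu ⟨N i, subset_span ⟨i, rfl⟩⟩
  refine ⟨c, u, ext fun i j => ?_⟩
  simpa [vecMulVec_apply] using (congrFun (congrArg Subtype.val (hc i)) j).symm

theorem IsSymm.exists_eq_smul_vecMulVec_self {c u : n → F} (h : (vecMulVec c u).IsSymm) :
    ∃ a : F, vecMulVec c u = a • vecMulVec u u := by
  by_cases hu : u = 0
  · exact ⟨0, by simp [hu]⟩
  obtain ⟨b, hb⟩ := Function.ne_iff.mp hu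
  refine ⟨c b / u b, Matrix.ext fun i j => ?_⟩
  have hcb : c i * u b = c b * u i := by simpa [vecMulVec_apply] using h.apply b i
  simp only [vecMulVec_apply, smul_apply, smul_eq_mul, Pi.zero_apply] at hb ⊢
  field_simp
  linear_combination u j * hcb

theorem IsSymm.exists_eq_smul_vecMulVec_self_of_rank_le_one [Fintype n] {N : Matrix n n F}
    (hs : N.IsSymm) (hr : N.rank ≤ 1) : ∃ (a : F) (v : n → F), N = a • vecMulVec v v := by
  obtain ⟨c, u, rfl⟩ := exists_eq_vecMulVec_of_rank_le_one hr
  obtain ⟨a, ha⟩ := hs.exists_eq_smul_vecMulVec_self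
  exact ⟨a, u, ha⟩

variable (n) in
def symmetricSubmodule (R : Type*) [Semiring R] : Submodule R (Matrix n n R) where
  carrier := {A | A.IsSymm}
  add_mem' := IsSymm.add
  zero_mem' := isSymm_zero
  smul_mem' c _ hA := hA.smul c

section SymmCoords

variable {α : Type*}

def ofSymmCoords (a : Fin 6 → α) : Matrix (Fin 3) (Fin 3) α :=
  !![a 0, a 1, a 2; a 1, a 3, a 4; a 2, a 4, a 5]

theorem isSymm_ofSymmCoords (a : Fin 6 → α) : (ofSymmCoords a).IsSymm :=
  IsSymm.ext fun i j => by fin_cases i <;> fin_cases j <;> rfl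

theorem ofSymmCoords_injective : Function.Injective (ofSymmCoords (α := α)) := fun a b h =>
  funext fun k => by
    fin_cases k
    exacts [congr($h 0 0), congr($h 0 1), congr($h 0 2), congr($h 1 1), congr($h 1 2),
      congr($h 2 2)]

end SymmCoords

end Matrix

open Matrix

theorem Submodule.finrank_sup_span_singleton_le {K V : Type*} [DivisionRing K] [AddCommGroup V]
    [Module K V] [FiniteDimensional K V] (p : Submodule K V) (v : V) :
    finrank K (p ⊔ span K {v} : Submodule K V) ≤ finrank K p + 1 :=
  (finrank_add_le_finrank_add_finrank _ _).trans
    (Nat.add_le_add_left ((finrank_span_le_card _).trans (by simp)) _)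

theorem exists_isSymm_forall_notMem_sup_span_vecMulVec_self {F : Type*} [Field F]
    [Fintype F] (W : Submodule F (Matrix (Fin 3) (Fin 3) F)) (hW : finrank F W ≤ 2) :
    ∃ M : Matrix (Fin 3) (Fin 3) F,
      M.IsSymm ∧ ∀ v ≠ 0, M ∉ W ⊔ span F {vecMulVec v v} := by
  classical
  set q := Fintype.card F with hq
  set P : (Fin 3 → F) → Set (Matrix (Fin 3) (Fin 3) F) := fun v =>
    ((W ⊔ span F {vecMulVec v v} : Submodule F _) : Set _)
  have hcard (v : Fin 3 → F) : (P v).ncard ≤ q ^ 3 := by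
    rw [← Nat.card_coe_set_eq, SetLike.coe_sort_coe, natCard_eq_pow_finrank (K := F),
      Nat.card_eq_fintype_card]
    exact Nat.pow_le_pow_right Fintype.card_pos
      ((finrank_sup_span_singleton_le W _).trans (by omega))
  have hunion : (⋃ v ∈ Finset.univ.erase 0, P v).ncard < q ^ 6 :=
    calc _ ≤ ∑ v ∈ Finset.univ.erase 0, (P v).ncard := Finset.set_ncard_biUnion_le _ _
      _ ≤ (q ^ 3 - 1) * q ^ 3 := by
          have hsum := Finset.sum_le_card_nsmul _ _ _
            fun v (_ : v ∈ Finset.univ.erase 0) => hcard v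
          rwa [Finset.card_erase_of_mem (Finset.mem_univ _), Finset.card_univ, Fintype.card_fun,
            Fintype.card_fin, ← hq, smul_eq_mul] at hsum
      _ < q ^ 6 := by
          rw [Nat.sub_mul, one_mul, ← pow_add]
          exact Nat.sub_lt (by positivity) (by positivity)
  by_contra! hcover
  have hsub : Set.range (ofSymmCoords (α := F)) ⊆ ⋃ v ∈ Finset.univ.erase 0, P v := by
    rintro _ ⟨a, rfl⟩
    obtain ⟨v, hv, hmem⟩ := hcover _ (isSymm_ofSymmCoords a)
    exact Set.mem_biUnion (Finset.mem_erase.mpr ⟨hv, Finset.mem_univ v⟩) hmem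
  have hle := Set.ncard_le_ncard hsub
  rw [Set.ncard_range_of_injective ofSymmCoords_injective, Nat.card_eq_fintype_card,
    Fintype.card_fun, Fintype.card_fin, ← hq] at hle
  omega

theorem Submodule.mem_sup_span_singleton_exchange {K V : Type*} [DivisionRing K] [AddCommGroup V]
    [Module K V] {p : Submodule K V} {x y : V} (hx : x ∈ p ⊔ span K {y}) (hxp : x ∉ p) :
    y ∈ p ⊔ span K {x} := by
  have hins (z : V) : p ⊔ span K {z} = span K (insert z (p : Set V)) := by
    rw [span_insert, span_eq, sup_comm]
  rw [hins] at hx ⊢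
  exact mem_span_insert_exchange hx (by rwa [span_eq])

/-- Every 2-dimensional subspace of symmetric `3 × 3` matrices over `𝔽_q` all of whose
nonzero elements have rank at least 2 is contained in a 3-dimensional such subspace. -/
theorem stmt16 {F : Type*} [Field F] [Fintype F]
    (W : Submodule F (Matrix (Fin 3) (Fin 3) F))
    (hsymm : ∀ M ∈ W, M.IsSymm) (hdim : Module.finrank F W = 2)
    (hrank : ∀ M ∈ W, M ≠ 0 → 2 ≤ M.rank) :
    ∃ W' : Submodule F (Matrix (Fin 3) (Fin 3) F), W ≤ W' ∧
      (∀ M ∈ W', M.IsSymm) ∧ Module.finrank F W' = 3 ∧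
      ∀ M ∈ W', M ≠ 0 → 2 ≤ M.rank := by
  obtain ⟨M, hMs, hM⟩ := exists_isSymm_forall_notMem_sup_span_vecMulVec_self W hdim.le
  obtain ⟨e, he⟩ := exists_ne (0 : Fin 3 → F)
  have hMW : M ∉ W := fun h => hM e he (mem_sup_left h)
  have hsymm' : W ⊔ span F {M} ≤ symmetricSubmodule (Fin 3) F :=
    sup_le (fun N hN => hsymm N hN) ((span_singleton_le_iff_mem _ _).mpr hMs)
  refine ⟨W ⊔ span F {M}, le_sup_left, fun N hN => hsymm' hN,
    by rw [finrank_sup_span_singleton hMW, hdim], fun N hN hN0 => ?_⟩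
  by_contra! hlt
  obtain ⟨a, v, rfl⟩ := (hsymm' hN).exists_eq_smul_vecMulVec_self_of_rank_le_one (by omega)
  have hv : v ≠ 0 := by rintro rfl; simp at hN0
  have hNW : a • vecMulVec v v ∉ W := fun h => (hrank _ h hN0).not_gt hlt
  have hspan : span F {a • vecMulVec v v} ≤ span F {vecMulVec v v} :=
    (span_singleton_le_iff_mem _ _).mpr (smul_mem _ _ (mem_span_singleton_self _))
  exact hM v hv (sup_le_sup_left hspan W (mem_sup_span_singleton_exchange hN hNW))
end
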